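/- Fix D ≥ 0 such that R^I_{p_X}(D) is finite. Then lim_{ε → 0⁺} inf { R^I_{p'}(D) : p' a probability distribution on 𝕏 with Σ_x |p'(x) − p_X(x)| ≤ ε } = R^I_{p_X}(D); equivalently, for every δ > 0 there exists ε > 0 such that every probability distribution p' on 𝕏 with Σ_x |p'(x) − p_X(x)| ≤ ε satisfies R^I_{p'}(D) ≥ R^I_{p_X}(D) − δ. -/

import Mathlib

open Finset Filter
open scoped Classical

/-- A probability distribution on a finite type, as a real-valued mass function. -/
def IsDist {α : Type} [Fintype α] (p : α → ℝ) : Prop :=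
  (∀ a, 0 ≤ p a) ∧ ∑ a, p a = 1

/-- The i.i.d. (product) distribution of `n` letters, each with per-letter distribution `p`. -/
noncomputable def iid {X : Type} (p : X → ℝ) (n : ℕ) (xs : Fin n → X) : ℝ :=
  ∏ i, p (xs i)

/-- The additive `n`-letter distortion `d^n(x^n, y^n) = ∑ i, d (x^n i) (y^n i)`. -/
noncomputable def dn {X Y : Type} (d : X → Y → ℝ) (n : ℕ) (xs : Fin n → X) (ys : Fin n → Y) : ℝ :=
  ∑ i, d (xs i) (ys i)

/-- A general channel: for each block-length `n`, a transition kernel from `𝕏^n` to `𝕐^n`. -/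
def Channel (X Y : Type) : Type := ∀ n : ℕ, (Fin n → X) → (Fin n → Y) → ℝ

/-- `c` is a genuine channel: every row is a probability distribution. -/
def IsChannel {X Y : Type} [Fintype X] [Fintype Y] (c : Channel X Y) : Prop :=
  ∀ (n : ℕ) (xs : Fin n → X), IsDist (c n xs)

/-- `Pr((1/n) d^n(X^n, Y^n) > D)` when the i.i.d. `p` source is the input to `c`
(stated with the inequality multiplied through by `n`). -/
noncomputable def probExcess {X Y : Type} [Fintype X] [Fintype Y] (p : X → ℝ)
    (c : Channel X Y) (d : X → Y → ℝ) (D : ℝ) (n : ℕ) : ℝ :=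
  ∑ xs : Fin n → X, ∑ ys : Fin n → Y,
    if (n : ℝ) * D < dn d n xs ys then iid p n xs * c n xs ys else 0

/-- The set `A` of general channels directly communicates the i.i.d. `p` source within
distortion `D`: the probability of excess distortion is bounded by a vanishing sequence `ω`,
uniformly over `c ∈ A`. -/
def DirectlyCommunicates {X Y : Type} [Fintype X] [Fintype Y] (A : Set (Channel X Y))
    (p : X → ℝ) (d : X → Y → ℝ) (D : ℝ) : Prop :=
  ∃ ω : ℕ → ℝ, Tendsto ω atTop (nhds 0) ∧
    ∀ c ∈ A, ∀ n : ℕ, 1 ≤ n → probExcess p c d D n ≤ ω n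

/-- The number `2 ^ ⌊nR⌋` of messages at block-length `n` and rate `R`. -/
noncomputable def msgCount (R : ℝ) (n : ℕ) : ℕ := 2 ^ ⌊(n : ℝ) * R⌋₊

/-- A deterministic rate-`R` block-length-`n` channel code over a channel with input space `I`
and output space `O`: an encoder from messages to `I^n` and a decoder from `O^n` to
messages-or-error (`Option`, with `none` playing the role of the error symbol). -/
abbrev ChCode (I O : Type) (R : ℝ) (n : ℕ) : Type :=
  (Fin (msgCount R n) → Fin n → I) × ((Fin n → O) → Option (Fin (msgCount R n)))

/-- The probability that the decoder output differs from the message `m`, over the randomness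
`κ` of the code and the channel noise. -/
noncomputable def errProb {I O : Type} [Fintype I] [Fintype O] [DecidableEq O]
    (R : ℝ) (n : ℕ) (κ : ChCode I O R n → ℝ) (c : Channel I O) (m : Fin (msgCount R n)) : ℝ :=
  ∑ ef : ChCode I O R n, ∑ ys : Fin n → O,
    if ef.2 ys ≠ some m then κ ef * c n (ef.1 m) ys else 0

/-- Rate `R` is reliably achievable over the set of channels `A` with random codes: a single
random rate-`R` code (a distribution `κ n` on deterministic codes for each `n`) whose
per-message error probability is bounded by a vanishing sequence `δ`, uniformly over `c ∈ A`. -/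
def ReliablyAchievable {I O : Type} [Fintype I] [Fintype O] [DecidableEq O]
    (A : Set (Channel I O)) (R : ℝ) : Prop :=
  ∃ κ : ∀ n : ℕ, ChCode I O R n → ℝ,
    (∀ n, IsDist (κ n)) ∧
    ∃ δ : ℕ → ℝ, Tendsto δ atTop (nhds 0) ∧
      ∀ c ∈ A, ∀ n : ℕ, 1 ≤ n → ∀ m : Fin (msgCount R n), errProb R n (κ n) c m ≤ δ n

/-- The `𝕏`-marginal of a joint distribution on `𝕏 × 𝕐`. -/
noncomputable def margX {X Y : Type} [Fintype X] [Fintype Y] (q : X × Y → ℝ) (x : X) : ℝ :=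
  ∑ y, q (x, y)

/-- The `𝕐`-marginal of a joint distribution on `𝕏 × 𝕐`. -/
noncomputable def margY {X Y : Type} [Fintype X] [Fintype Y] (q : X × Y → ℝ) (y : Y) : ℝ :=
  ∑ x, q (x, y)

/-- The mutual information `I(q) = ∑ q(x,y) log₂ (q(x,y) / (q_Z(x) q_Y(y)))` of a joint
distribution `q` (the convention `0 log 0 = 0` holds automatically since `0 * x = 0`). -/
noncomputable def mutualInfo {X Y : Type} [Fintype X] [Fintype Y] (q : X × Y → ℝ) : ℝ :=
  ∑ z : X × Y, q z * Real.logb 2 (q z / (margX q z.1 * margY q z.2))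

/-- The information-theoretic rate-distortion function `R^I_p(D)`: the infimum (in `EReal`,
so that the infimum over the empty set is `+∞`) of `I(q)` over joint distributions `q` with
`𝕏`-marginal `p` and expected distortion at most `D`. -/
noncomputable def RDF {X Y : Type} [Fintype X] [Fintype Y]
    (p : X → ℝ) (d : X → Y → ℝ) (D : ℝ) : EReal :=
  ⨅ q ∈ {q : X × Y → ℝ |
      IsDist q ∧ (∀ x, margX q x = p x) ∧ ∑ z : X × Y, q z * d z.1 z.2 ≤ D},
    (mutualInfo q : EReal)

/-! The rate-distortion function is lower semicontinuous in the source. For real `c`, the sources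
`p` admitting a joint `q` with `𝕏`-marginal `p`, distortion at most `D` and `I(q) ≤ c` form the
projection of a closed subset of (sources) × (simplex of joints): closed because on nonnegative
`q` mutual information is `H(X) + H(Y) - H(X,Y)`, a continuous function. As the simplex is compact,
this projection is closed, so if `R(p) > c` a whole neighbourhood of `p` has `R ≥ c`. The upper
bound in the limit is trivial since `p` lies in every `ε`-ball. -/

open Real Topology

section RateDistortion

variable {X Y : Type} [Fintype X] [Fintype Y]

def feasibleJoints (p : X → ℝ) (d : X → Y → ℝ) (D : ℝ) : Set (X × Y → ℝ) :=
  {q | IsDist q ∧ (∀ x, margX q x = p x) ∧ ∑ z : X × Y, q z * d z.1 z.2 ≤ D}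

lemma le_margX {q : X × Y → ℝ} (hq : ∀ z, 0 ≤ q z) (z : X × Y) : q z ≤ margX q z.1 :=
  single_le_sum (f := fun y => q (z.1, y)) (fun _ _ => hq _) (mem_univ z.2)

lemma le_margY {q : X × Y → ℝ} (hq : ∀ z, 0 ≤ q z) (z : X × Y) : q z ≤ margY q z.2 :=
  single_le_sum (f := fun x => q (x, z.2)) (fun _ _ => hq _) (mem_univ z.1)

lemma sum_mul_comp_margX (q : X × Y → ℝ) (f : ℝ → ℝ) :
    ∑ z, q z * f (margX q z.1) = ∑ x, margX q x * f (margX q x) := by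
  simp only [Fintype.sum_prod_type, ← sum_mul, margX]

lemma sum_mul_comp_margY (q : X × Y → ℝ) (f : ℝ → ℝ) :
    ∑ z, q z * f (margY q z.2) = ∑ y, margY q y * f (margY q y) := by
  simp only [Fintype.sum_prod_type_right, ← sum_mul, margY]

lemma mutualInfo_eq_of_nonneg {q : X × Y → ℝ} (hq : ∀ z, 0 ≤ q z) :
    mutualInfo q = (∑ x, negMulLog (margX q x) + ∑ y, negMulLog (margY q y)
      - ∑ z, negMulLog (q z)) / log 2 := by
  have hterm : ∀ z, q z * log (q z / (margX q z.1 * margY q z.2)) =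
      q z * log (q z) - q z * log (margX q z.1) - q z * log (margY q z.2) := by
    intro z
    rcases (hq z).eq_or_lt with h | h
    · simp [← h]
    have hX := h.trans_le (le_margX hq z)
    have hY := h.trans_le (le_margY hq z)
    rw [log_div h.ne' (mul_pos hX hY).ne', log_mul hX.ne' hY.ne']
    ring
  simp only [mutualInfo, logb, mul_div_assoc', hterm, ← sum_div, sum_sub_distrib,
    sum_mul_comp_margX q log, sum_mul_comp_margY q log, negMulLog, neg_mul, sum_neg_distrib]
  ring

lemma continuousOn_mutualInfo :
    ContinuousOn (mutualInfo (X := X) (Y := Y)) {q | ∀ z, 0 ≤ q z} := by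
  refine ContinuousOn.congr ?_ fun q hq => mutualInfo_eq_of_nonneg hq
  unfold margX margY
  fun_prop

lemma isClosed_setOf_exists_mutualInfo_le (d : X → Y → ℝ) (D c : ℝ) :
    IsClosed {p : X → ℝ | ∃ q ∈ feasibleJoints p d D, mutualInfo q ≤ c} := by
  let K : Set ((X → ℝ) × stdSimplex ℝ (X × Y)) := {pq |
    (∀ x, margX pq.2.1 x = pq.1 x) ∧ ∑ z : X × Y, pq.2.1 z * d z.1 z.2 ≤ D ∧ mutualInfo pq.2.1 ≤ c}
  have hMI : Continuous fun q : stdSimplex ℝ (X × Y) => mutualInfo (q : X × Y → ℝ) :=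
    (continuousOn_mutualInfo.mono fun _ hq => hq.1).domRestrict
  have hval : Continuous fun pq : (X → ℝ) × stdSimplex ℝ (X × Y) => pq.2.1 :=
    continuous_subtype_val.comp continuous_snd
  have hK : IsClosed K := by
    simp only [K, Set.ofPred_and, Set.ofPred_forall]
    refine (isClosed_iInter fun x => isClosed_eq ?_ (by fun_prop)).inter
      ((isClosed_le ?_ continuous_const).inter
        (isClosed_le (hMI.comp continuous_snd) continuous_const))
    · exact continuous_finsetSum _ fun y _ => (continuous_apply _).comp hval
    · exact continuous_finsetSum _ fun z _ => ((continuous_apply z).comp hval).mul_const _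
  convert isClosedMap_fst_of_compactSpace K hK using 1
  ext p
  constructor
  · rintro ⟨q, ⟨hq, hmarg, hdist⟩, hMIq⟩
    exact ⟨(p, ⟨q, hq⟩), ⟨hmarg, hdist, hMIq⟩, rfl⟩
  · rintro ⟨⟨p, q, hq⟩, ⟨hmarg, hdist, hMIq⟩, rfl⟩
    exact ⟨q, ⟨hq, hmarg, hdist⟩, hMIq⟩

theorem lowerSemicontinuous_RDF (d : X → Y → ℝ) (D : ℝ) :
    LowerSemicontinuous fun p : X → ℝ => RDF p d D := by
  intro p y hy
  obtain ⟨c, hyc, hc⟩ := EReal.lt_iff_exists_real_btwn.mp hy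
  have hp : p ∉ {p : X → ℝ | ∃ q ∈ feasibleJoints p d D, mutualInfo q ≤ c} := by
    rintro ⟨q, hq, hMIq⟩
    exact (iInf₂_le q hq).trans (EReal.coe_le_coe_iff.mpr hMIq) |>.not_gt hc
  filter_upwards [(isClosed_setOf_exists_mutualInfo_le d D c).isOpen_compl.mem_nhds hp] with p' hp'
  refine hyc.trans_le (le_iInf₂ fun q hq => ?_)
  exact EReal.coe_le_coe_iff.mpr (not_le.mp fun h => hp' ⟨q, hq, h⟩).le

lemma exists_pos_forall_sum_abs_sub_le_of_eventually {P : (X → ℝ) → Prop} {p : X → ℝ}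
    (h : ∀ᶠ p' in 𝓝 p, P p') : ∃ ε > 0, ∀ p', ∑ x, |p' x - p x| ≤ ε → P p' := by
  obtain ⟨ε, hε, hball⟩ := Metric.eventually_nhds_iff_ball.mp h
  refine ⟨ε / 2, half_pos hε, fun p' hp' => hball p' ?_⟩
  rw [Metric.mem_ball, dist_pi_lt_iff hε]
  intro x
  calc dist (p' x) (p x) = |p' x - p x| := Real.dist_eq _ _
    _ ≤ ∑ x, |p' x - p x| :=
      single_le_sum (f := fun x => |p' x - p x|) (fun _ _ => abs_nonneg _) (mem_univ x)
    _ < ε := by linarith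

theorem tendsto_iInf_sum_abs_sub_le {α : Type*} [CompleteLinearOrder α] [DenselyOrdered α]
    [TopologicalSpace α] [OrderTopology α] {f : (X → ℝ) → α} {P : (X → ℝ) → Prop}
    {p : X → ℝ} (hp : P p) (hf : LowerSemicontinuousAt f p) :
    Tendsto (fun ε : ℝ => ⨅ p' ∈ {p' | P p' ∧ ∑ x, |p' x - p x| ≤ ε}, f p')
      (𝓝[>] 0) (𝓝 (f p)) := by
  refine tendsto_order.mpr ⟨fun b hb => ?_, fun b hb => ?_⟩
  · obtain ⟨c, hbc, hc⟩ := exists_between hb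
    obtain ⟨ε₀, hε₀, hclose⟩ := exists_pos_forall_sum_abs_sub_le_of_eventually (hf c hc)
    filter_upwards [Ioo_mem_nhdsGT hε₀] with ε hε
    exact hbc.trans_le <| le_iInf₂ fun p' hp' => (hclose p' (hp'.2.trans hε.2.le)).le
  · filter_upwards [self_mem_nhdsWithin] with ε (hε : 0 < ε)
    refine (iInf₂_le p ⟨hp, ?_⟩).trans_lt hb
    simpa using hε.le

end RateDistortion

theorem stmt10_general {X Y : Type} [Fintype X] [Fintype Y]
    (p : X → ℝ) (hp : IsDist p)
    (d : X → Y → ℝ)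
    (D : ℝ)
    (r : ℝ) (hfin : RDF p d D = (r : EReal)) :
    Filter.Tendsto
        (fun ε : ℝ =>
          ⨅ p' ∈ {p' : X → ℝ | IsDist p' ∧ (∑ x, |p' x - p x|) ≤ ε}, RDF p' d D)
        (nhdsWithin 0 (Set.Ioi 0)) (nhds (RDF p d D))
      ∧ ∀ δ : ℝ, 0 < δ → ∃ ε : ℝ, 0 < ε ∧
          ∀ p' : X → ℝ, IsDist p' → (∑ x, |p' x - p x|) ≤ ε →
            ((r - δ : ℝ) : EReal) ≤ RDF p' d D := by
  have hlsc := lowerSemicontinuous_RDF (X := X) d D p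
  refine ⟨tendsto_iInf_sum_abs_sub_le hp hlsc, fun δ hδ => ?_⟩
  have hlt : ((r - δ : ℝ) : EReal) < RDF p d D := by
    rw [hfin, EReal.coe_lt_coe_iff]
    linarith
  obtain ⟨ε, hε, hclose⟩ := exists_pos_forall_sum_abs_sub_le_of_eventually (hlsc _ hlt)
  exact ⟨ε, hε, fun p' _ hp' => (hclose p' hp').le⟩

/-- Fix `D ≥ 0` such that `R^I_{p_X}(D)` is finite, say equal to the real
number `r`. Then `inf { R^I_{p'}(D) : ∑ |p'(x) − p_X(x)| ≤ ε }` tends to `R^I_{p_X}(D)` as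
`ε → 0⁺`; equivalently, for every `δ > 0` there is `ε > 0` such that every distribution `p'`
on `𝕏` with `∑ |p'(x) − p_X(x)| ≤ ε` satisfies `R^I_{p'}(D) ≥ R^I_{p_X}(D) − δ`. -/
theorem stmt10 {X Y : Type} [Fintype X] [Fintype Y] [Nonempty X] [Nonempty Y]
    (p : X → ℝ) (hp : IsDist p)
    (d : X → Y → ℝ) (hd : ∀ x y, 0 ≤ d x y)
    (D : ℝ) (hD : 0 ≤ D)
    (r : ℝ) (hfin : RDF p d D = (r : EReal)) :
    Filter.Tendsto
        (fun ε : ℝ =>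
          ⨅ p' ∈ {p' : X → ℝ | IsDist p' ∧ (∑ x, |p' x - p x|) ≤ ε}, RDF p' d D)
        (nhdsWithin 0 (Set.Ioi 0)) (nhds (RDF p d D))
      ∧ ∀ δ : ℝ, 0 < δ → ∃ ε : ℝ, 0 < ε ∧
          ∀ p' : X → ℝ, IsDist p' → (∑ x, |p' x - p x|) ≤ ε →
            ((r - δ : ℝ) : EReal) ≤ RDF p' d D :=
  stmt10_general p hp d D r hfin
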